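/- arXiv:1110.3310 — 2 statements merged into one kernel-verified Lean document; each statement's English description precedes it below -/
import Mathlib

section
/- Let p ≥ 1, q ≥ 1 be integers. The set T_0 is homeomorphic to T = Δ^{p−1} × [0,1]^q, and for each 1 ≤ j ≤ q and ε ∈ {0,1} the set T_{j,ε} is homeomorphic to Δ^p × [0,1]^{q−1}, where Δ^p = {u ∈ ℝ^p : u_i ≥ 0 for all i, u_1+⋯+u_p ≤ 1} is the standard p-simplex. (This identifies the homeomorphism types of the subtiles in the subdivision rule for the (p+q)-torus: one tile of type Δ^{p−1} × I^q and 2q tiles of type Δ^p × I^{q−1}.) -/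
/-!
In the centred coordinates `v = 2w - 1` the tile `T` is `Δ^{p-1} × [-1,1]^q`, and `T₀` is the
same region with the cube fibre over `x` shrunk to `[-s(x), s(x)]^q`; dilating each fibre by
`1/s(x)` gives `T₀ ≃ T`. On `T_{j,ε}` the coordinate `t = ±(2w_j - 1)` ranges over `[s(x), 1]` and
the other `q - 1` centred coordinates over `[-t, t]`; dilating those fibres by `1/t` leaves the
region `{(x, t) : x ∈ Δ^{p-1}, s(x) ≤ t ≤ 1}` times a cube, and that region is `Δ^p` via
`(x, t) ↦ (x, 2(t - s(x)))`.
-/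

open Set

/-- The standard `m`-simplex `{x ∈ ℝ^m : xᵢ ≥ 0, ∑ xᵢ ≤ 1}`. -/
def stdSimplexSet (m : ℕ) : Set (Fin m → ℝ) :=
  {x | (∀ i, 0 ≤ x i) ∧ ∑ i, x i ≤ 1}

/-- The tile `T = Δ^{p-1} × [0,1]^q ⊆ ℝ^{p-1} × ℝ^q`. -/
def tileT (p q : ℕ) : Set ((Fin (p - 1) → ℝ) × (Fin q → ℝ)) :=
  {z | z.1 ∈ stdSimplexSet (p - 1) ∧ ∀ j, z.2 j ∈ Icc (0 : ℝ) 1}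

/-- `s(x) = (1 + x₁ + ⋯ + x_{p-1})/2`. -/
noncomputable def sFun (p : ℕ) (x : Fin (p - 1) → ℝ) : ℝ := (1 + ∑ i, x i) / 2

/-- The `2q+1` subtiles: `none` is `T₀ = {(x,w) ∈ T : max_j |2w_j - 1| ≤ s(x)}`,
and `some (j, ε)` is `T_{j,ε}`. -/
def subtile (p q : ℕ) : Option (Fin q × Bool) → Set ((Fin (p - 1) → ℝ) × (Fin q → ℝ))
  | none => {z ∈ tileT p q | ∀ j, |2 * z.2 j - 1| ≤ sFun p z.1}
  | some (j, e) =>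
      {z ∈ tileT p q |
        (∀ k, |2 * z.2 k - 1| ≤ (if e then 2 * z.2 j - 1 else 1 - 2 * z.2 j)) ∧
        sFun p z.1 ≤ (if e then 2 * z.2 j - 1 else 1 - 2 * z.2 j)}

noncomputable def dilateAboutHalf (c w : ℝ) : ℝ := (c * (2 * w - 1) + 1) / 2

section Dilation

variable {c w : ℝ}

lemma two_mul_dilateAboutHalf_sub_one : 2 * dilateAboutHalf c w - 1 = c * (2 * w - 1) := by
  unfold dilateAboutHalf; ring

lemma dilateAboutHalf_inv_dilateAboutHalf (hc : c ≠ 0) :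
    dilateAboutHalf c⁻¹ (dilateAboutHalf c w) = w := by
  unfold dilateAboutHalf; field_simp; ring

lemma dilateAboutHalf_dilateAboutHalf_inv (hc : c ≠ 0) :
    dilateAboutHalf c (dilateAboutHalf c⁻¹ w) = w := by
  simpa using dilateAboutHalf_inv_dilateAboutHalf (w := w) (inv_ne_zero hc)

@[fun_prop]
lemma continuous_dilateAboutHalf : Continuous fun x : ℝ × ℝ => dilateAboutHalf x.1 x.2 := by
  unfold dilateAboutHalf; fun_prop

lemma abs_two_mul_sub_one_le_one : |2 * w - 1| ≤ 1 ↔ w ∈ Icc 0 1 := by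
  rw [abs_le, mem_Icc]; constructor <;> rintro ⟨h₁, h₂⟩ <;> constructor <;> linarith

lemma dilateAboutHalf_inv_mem_Icc (hc : 0 < c) :
    dilateAboutHalf c⁻¹ w ∈ Icc 0 1 ↔ |2 * w - 1| ≤ c := by
  rw [← abs_two_mul_sub_one_le_one, two_mul_dilateAboutHalf_sub_one, abs_mul, abs_inv,
    abs_of_pos hc, inv_mul_le_iff₀ hc, mul_one]

lemma abs_two_mul_dilateAboutHalf_sub_one_le (hc : 0 < c) (hw : w ∈ Icc 0 1) :
    |2 * dilateAboutHalf c w - 1| ≤ c := by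
  rw [← dilateAboutHalf_inv_mem_Icc hc, dilateAboutHalf_inv_dilateAboutHalf hc.ne']
  exact hw

end Dilation

section CubeFibers

variable {X ι : Type*} [TopologicalSpace X]

noncomputable def cubeFiberRescaling (A : Set X) (r : X → ℝ) (hr : Continuous r)
    (hA : ∀ x ∈ A, 0 < r x) :
    {z : X × (ι → ℝ) | z.1 ∈ A ∧ ∀ k, |2 * z.2 k - 1| ≤ r z.1} ≃ₜ
      A ×ˢ univ.pi fun _ : ι => Icc (0 : ℝ) 1 where
  toFun z := ⟨(z.1.1, fun k => dilateAboutHalf (r z.1.1)⁻¹ (z.1.2 k)),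
    z.2.1, fun k _ => (dilateAboutHalf_inv_mem_Icc (hA _ z.2.1)).2 (z.2.2 k)⟩
  invFun z := ⟨(z.1.1, fun k => dilateAboutHalf (r z.1.1) (z.1.2 k)),
    z.2.1, fun k => abs_two_mul_dilateAboutHalf_sub_one_le (hA _ z.2.1) (z.2.2 k trivial)⟩
  left_inv z := Subtype.ext <| Prod.ext rfl <| funext fun _ =>
    dilateAboutHalf_dilateAboutHalf_inv (hA _ z.2.1).ne'
  right_inv z := Subtype.ext <| Prod.ext rfl <| funext fun _ =>
    dilateAboutHalf_inv_dilateAboutHalf (hA _ z.2.1).ne'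
  continuous_toFun := by
    have hr₀ : ∀ z : {z : X × (ι → ℝ) | z.1 ∈ A ∧ ∀ k, |2 * z.2 k - 1| ≤ r z.1}, r z.1.1 ≠ 0 :=
      fun z => (hA _ z.2.1).ne'
    fun_prop (disch := exact hr₀)
  continuous_invFun := by fun_prop

end CubeFibers

section SFun

variable {p : ℕ} {x : Fin (p - 1) → ℝ}

lemma half_le_sFun (hx : x ∈ stdSimplexSet (p - 1)) : 1 / 2 ≤ sFun p x := by
  have : 0 ≤ ∑ i, x i := Finset.sum_nonneg fun i _ => hx.1 i
  unfold sFun; linarith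

lemma sFun_le_one (hx : x ∈ stdSimplexSet (p - 1)) : sFun p x ≤ 1 := by
  have := hx.2
  unfold sFun; linarith

@[fun_prop]
lemma continuous_sFun : Continuous (sFun p) := by
  unfold sFun; fun_prop

end SFun

lemma sFun_succ {n : ℕ} (x : Fin n → ℝ) : sFun (n + 1) x = (1 + ∑ i, x i) / 2 := rfl

lemma sFun_succ_succ {n : ℕ} (u : Fin (n + 1) → ℝ) :
    sFun (n + 1 + 1) u = sFun (n + 1) (Fin.init u) + u (Fin.last n) / 2 := by
  rw [sFun_succ, sFun_succ, Fin.sum_univ_castSucc]; simp only [Fin.init]; ring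

lemma mem_stdSimplexSet_succ {n : ℕ} {u : Fin (n + 1) → ℝ} :
    u ∈ stdSimplexSet (n + 1) ↔
      Fin.init u ∈ stdSimplexSet n ∧ 0 ≤ u (Fin.last n) ∧ sFun (n + 1 + 1) u ≤ 1 := by
  rw [sFun_succ_succ, sFun_succ]
  simp only [stdSimplexSet, mem_ofPred_eq, Fin.forall_fin_succ', Fin.sum_univ_castSucc, Fin.init]
  constructor
  · rintro ⟨⟨hx, ha⟩, hs⟩
    exact ⟨⟨hx, by linarith⟩, ha, by linarith⟩
  · rintro ⟨⟨hx, -⟩, ha, hs⟩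
    exact ⟨⟨hx, ha⟩, by linarith⟩

lemma tileT_eq_prod (p q : ℕ) :
    tileT p q = stdSimplexSet (p - 1) ×ˢ univ.pi fun _ : Fin q => Icc (0 : ℝ) 1 := by
  ext z; exact and_congr_right fun _ => mem_univ_pi.symm

lemma subtile_none_eq (p q : ℕ) :
    subtile p q none =
      {z | z.1 ∈ stdSimplexSet (p - 1) ∧ ∀ k, |2 * z.2 k - 1| ≤ sFun p z.1} := by
  ext z
  refine ⟨fun ⟨⟨hx, _⟩, hz⟩ => ⟨hx, hz⟩, fun ⟨hx, hz⟩ => ⟨⟨hx, fun k => ?_⟩, hz⟩⟩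
  exact abs_two_mul_sub_one_le_one.1 ((hz k).trans (sFun_le_one hx))

noncomputable def subtileNoneHomeomorph (p q : ℕ) : subtile p q none ≃ₜ tileT p q :=
  (Homeomorph.setCongr (subtile_none_eq p q)).trans <|
    (cubeFiberRescaling _ (sFun p) continuous_sFun fun _ hx =>
      one_half_pos.trans_le (half_le_sFun hx)).trans
    (Homeomorph.setCongr (tileT_eq_prod p q).symm)

noncomputable def Homeomorph.piFinSuccAbove (Y : Type*) [TopologicalSpace Y] {n : ℕ}
    (j : Fin (n + 1)) : (Fin (n + 1) → Y) ≃ₜ Y × (Fin n → Y) where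
  toEquiv := (Fin.insertNthEquiv (fun _ => Y) j).symm
  continuous_toFun := (continuous_apply j).prodMk (continuous_pi fun _ => continuous_apply _)
  continuous_invFun := by simp only [Fin.insertNthEquiv]; fun_prop

noncomputable def signedCentering (e : Bool) : ℝ ≃ₜ ℝ where
  toFun a := if e then 2 * a - 1 else 1 - 2 * a
  invFun t := if e then (t + 1) / 2 else (1 - t) / 2
  left_inv a := by cases e <;> simp only [Bool.false_eq_true, if_true, if_false] <;> ring
  right_inv t := by cases e <;> simp only [Bool.false_eq_true, if_true, if_false] <;> ring
  continuous_toFun := by cases e <;> simp only [Bool.false_eq_true, if_true, if_false] <;> fun_prop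
  continuous_invFun := by cases e <;> simp only [Bool.false_eq_true, if_true, if_false] <;> fun_prop

lemma abs_signedCentering (e : Bool) (a : ℝ) : |signedCentering e a| = |2 * a - 1| := by
  cases e
  · exact abs_sub_comm _ _
  · rfl

noncomputable def splitCoordinate {X : Type*} [TopologicalSpace X] {n : ℕ} (j : Fin (n + 1))
    (e : Bool) : X × (Fin (n + 1) → ℝ) ≃ₜ (X × ℝ) × (Fin n → ℝ) :=
  ((Homeomorph.refl X).prodCongr ((Homeomorph.piFinSuccAbove ℝ j).trans
    ((signedCentering e).prodCongr (Homeomorph.refl _)))).trans (Homeomorph.prodAssoc _ _ _).symm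

lemma splitCoordinate_apply {X : Type*} [TopologicalSpace X] {n : ℕ} (j : Fin (n + 1))
    (e : Bool) (z : X × (Fin (n + 1) → ℝ)) :
    splitCoordinate j e z = ((z.1, signedCentering e (z.2 j)), fun k => z.2 (j.succAbove k)) :=
  rfl

def aboveSFun (p : ℕ) : Set ((Fin (p - 1) → ℝ) × ℝ) :=
  {y | y.1 ∈ stdSimplexSet (p - 1) ∧ sFun p y.1 ≤ y.2 ∧ y.2 ≤ 1}

lemma subtile_some_eq_preimage (p q : ℕ) (j : Fin (q + 1)) (e : Bool) :
    subtile p (q + 1) (some (j, e)) =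
      splitCoordinate j e ⁻¹' {y | y.1 ∈ aboveSFun p ∧ ∀ k, |2 * y.2 k - 1| ≤ y.1.2} := by
  ext ⟨x, w⟩
  change (_ ∧ _) ∧ (∀ k, |2 * w k - 1| ≤ signedCentering e (w j)) ∧
    sFun p x ≤ signedCentering e (w j) ↔ _
  simp only [aboveSFun, splitCoordinate_apply, mem_preimage, mem_ofPred_eq,
    Fin.forall_iff_succAbove j, ← abs_two_mul_sub_one_le_one, ← abs_signedCentering e (w j)]
  set t := signedCentering e (w j)
  constructor
  · rintro ⟨⟨hx, ht, -⟩, ⟨-, hw⟩, hst⟩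
    exact ⟨⟨hx, hst, (le_abs_self t).trans ht⟩, hw⟩
  · rintro ⟨⟨hx, hst, ht⟩, hw⟩
    have ht₀ : 0 ≤ t := (one_half_pos.le.trans (half_le_sFun hx)).trans hst
    rw [abs_of_nonneg ht₀]
    exact ⟨⟨hx, ht, fun k => (hw k).trans ht⟩, ⟨le_rfl, hw⟩, hst⟩

noncomputable def aboveSFunHomeomorph (n : ℕ) : aboveSFun (n + 1) ≃ₜ stdSimplexSet (n + 1) where
  toFun y := ⟨Fin.snoc y.1.1 (2 * (y.1.2 - sFun (n + 1) y.1.1)), by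
    obtain ⟨hx, hs, ht⟩ := y.2
    refine mem_stdSimplexSet_succ.2 ?_
    simp only [sFun_succ_succ, Fin.init_snoc, Fin.snoc_last]
    exact ⟨hx, by linarith, by linarith⟩⟩
  invFun u := ⟨(Fin.init u.1, sFun (n + 1 + 1) u.1), by
    obtain ⟨hx, ha, hs⟩ := mem_stdSimplexSet_succ.1 u.2
    refine ⟨hx, ?_, hs⟩
    rw [sFun_succ_succ]; linarith⟩
  left_inv y := by
    ext
    · simp only [Fin.init_snoc]
    · simp only [sFun_succ_succ, Fin.init_snoc, Fin.snoc_last]; ring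
  right_inv u := Subtype.ext <| by
    change Fin.snoc (Fin.init u.1) (2 * (sFun (n + 1 + 1) u.1 - sFun (n + 1) (Fin.init u.1))) = u.1
    rw [sFun_succ_succ]
    convert Fin.snoc_init_self u.1 using 2
    ring
  continuous_toFun := by apply Continuous.subtype_mk; fun_prop
  continuous_invFun := by
    apply Continuous.subtype_mk
    exact continuous_subtype_val.finInit.prodMk (continuous_sFun.comp continuous_subtype_val)

noncomputable def subtileSomeHomeomorph (p q : ℕ) (j : Fin (q + 1)) (e : Bool) :
    subtile p (q + 1) (some (j, e)) ≃ₜ aboveSFun p ×ˢ univ.pi fun _ : Fin q => Icc (0 : ℝ) 1 :=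
  ((splitCoordinate j e).sets (subtile_some_eq_preimage p q j e)).trans <|
    cubeFiberRescaling (aboveSFun p) Prod.snd continuous_snd fun _ hy =>
      one_half_pos.trans_le ((half_le_sFun hy.1).trans hy.2.1)

theorem torus_subdivision_subtile_homeomorphism_types_general (p q : ℕ) (hp : 1 ≤ p) :
    Nonempty (↥(subtile p q none) ≃ₜ ↥(tileT p q)) ∧
    ∀ (j : Fin q) (e : Bool),
      Nonempty (↥(subtile p q (some (j, e))) ≃ₜ ↥(tileT (p + 1) (q - 1))) := by
  refine ⟨⟨subtileNoneHomeomorph p q⟩, fun j e => ?_⟩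
  obtain ⟨n, rfl⟩ := Nat.exists_eq_add_of_le' hp
  obtain ⟨m, rfl⟩ := Nat.exists_eq_add_one_of_ne_zero j.pos.ne'
  exact ⟨(subtileSomeHomeomorph _ _ j e).trans <| (Homeomorph.Set.prod _ _).trans <|
    ((aboveSFunHomeomorph n).prodCongr (Homeomorph.refl _)).trans <|
    (Homeomorph.Set.prod _ _).symm.trans <|
    Homeomorph.setCongr (tileT_eq_prod (n + 1 + 1) m).symm⟩

/-- `T₀` is homeomorphic to `T = Δ^{p-1} × [0,1]^q`, and each `T_{j,ε}` is homeomorphic to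
`Δ^p × [0,1]^{q-1}` (note `tileT (p+1) (q-1) = Δ^p × [0,1]^{q-1}`). -/
theorem torus_subdivision_subtile_homeomorphism_types (p q : ℕ) (hp : 1 ≤ p) (hq : 1 ≤ q) :
    Nonempty (↥(subtile p q none) ≃ₜ ↥(tileT p q)) ∧
    ∀ (j : Fin q) (e : Bool),
      Nonempty (↥(subtile p q (some (j, e))) ≃ₜ ↥(tileT (p + 1) (q - 1))) :=
  torus_subdivision_subtile_homeomorphism_types_general p q hp
end

section
/- For any two permutations σ and τ of {1,…,p}, the intersection K_σ ∩ K_τ equals the convex hull of the common vertex set {v_0^σ,…,v_p^σ} ∩ {v_0^τ,…,v_p^τ}; in particular any two simplices of the standard simplicial decomposition of the cube meet in a common face. -/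
open Set

/-- The vertex `v_k^σ = e_{σ(1)} + ⋯ + e_{σ(k)}` of the simplex `K_σ`
(0-indexed: the sum of `e_{σ(i)}` over the first `k` indices `i`). -/
def cubeVtx (p : ℕ) (σ : Equiv.Perm (Fin p)) (k : ℕ) : Fin p → ℝ :=
  ∑ i ∈ Finset.univ.filter fun i : Fin p => (i : ℕ) < k, Pi.single (σ i) 1

/-- The simplex `K_σ`, the convex hull of the `p+1` points `v_0^σ, …, v_p^σ`. -/
def Ksimp (p : ℕ) (σ : Equiv.Perm (Fin p)) : Set (Fin p → ℝ) :=
  convexHull ℝ {x | ∃ k ≤ p, x = cubeVtx p σ k}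

/-- The unit cube `[0,1]^p`. -/
def unitCube (p : ℕ) : Set (Fin p → ℝ) :=
  {x | ∀ i, x i ∈ Icc (0 : ℝ) 1}

/-!
A point `x` of `K_σ` has its coordinates decreasing along `σ`, and its barycentric weights are
the gaps `y_k - y_{k+1}` of the sequence `y = (1, x_{σ(1)}, …, x_{σ(p)}, 0, 0, …)`
(`paddedCoord σ x`). Whenever a gap is positive, the vertex `v_k^σ` is the indicator of the
superlevel set `{x > y_{k+1}}`. If `x` also lies in `K_τ`, its coordinates decrease along `τ`
as well, so every superlevel set of `x` is an initial segment of `τ` and its indicator is a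
vertex of `K_τ`. Hence `x` is a convex combination of common vertices.
-/

theorem Convex.sum_mem_of_ne_zero {R E ι : Type*} [Field R] [LinearOrder R]
    [IsStrictOrderedRing R] [AddCommGroup E] [Module R E] {s : Set E} (hs : Convex R s)
    {t : Finset ι} {w : ι → R} {z : ι → E} (h₀ : ∀ i ∈ t, 0 ≤ w i) (h₁ : ∑ i ∈ t, w i = 1)
    (hz : ∀ i ∈ t, w i ≠ 0 → z i ∈ s) : ∑ i ∈ t, w i • z i ∈ s := by
  classical
  rw [← Finset.sum_filter_of_ne fun i _ h => left_ne_zero_of_smul h]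
  refine hs.sum_mem (fun i hi => h₀ i (Finset.mem_filter.1 hi).1) ?_ fun i hi => ?_
  · rw [Finset.sum_filter_ne_zero, h₁]
  · exact hz i (Finset.mem_filter.1 hi).1 (Finset.mem_filter.1 hi).2

theorem Finset.sum_range_ite_lt_sub {G : Type*} [AddCommGroup G] (f : ℕ → G) {i n : ℕ}
    (h : i < n) :
    ∑ k ∈ range n, (if i < k then f k - f (k + 1) else 0) = f (i + 1) - f n := by
  rw [← sum_filter, show (range n).filter (i < ·) = Ico (i + 1) n by ext; simp; omega]
  simpa only [sub_neg_eq_add, neg_add_eq_sub] using sum_Ico_sub (fun k => -f k) h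

theorem Fin.mem_iff_lt_card_of_isLowerSet {p : ℕ} {s : Finset (Fin p)}
    (hs : IsLowerSet (s : Set (Fin p))) (i : Fin p) : i ∈ s ↔ (i : ℕ) < s.card := by
  constructor
  · intro hi
    have := Finset.card_le_card fun j hj => hs (Finset.mem_Iic.1 hj) hi
    rw [Fin.card_Iic] at this
    omega
  · intro h
    by_contra hi
    have := Finset.card_le_card fun j hj =>
      Finset.mem_Iio.2 (lt_of_not_ge fun hij => hi (hs hij hj))
    rw [Fin.card_Iio] at this
    omega

variable {p : ℕ} (σ : Equiv.Perm (Fin p))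

theorem cubeVtx_apply (k : ℕ) (j : Fin p) :
    cubeVtx p σ k j = if ((σ.symm j : Fin p) : ℕ) < k then 1 else 0 := by
  classical
  simp only [cubeVtx, Finset.sum_apply, Pi.single_apply, eq_comm (a := j),
    ← Equiv.eq_symm_apply, Finset.sum_ite_eq', Finset.mem_filter, Finset.mem_univ,
    true_and]

theorem exists_cubeVtx_eq_indicator {x : Fin p → ℝ} (hx : Antitone (x ∘ σ)) (t : ℝ) :
    ∃ m ≤ p, cubeVtx p σ m = {j | t < x j}.indicator 1 := by
  classical
  set s := Finset.univ.filter fun i => t < x (σ i)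
  have hs : IsLowerSet (s : Set (Fin p)) := fun i j hji hi => by
    simp only [s, Finset.coe_filter, Finset.mem_univ, true_and, Set.mem_ofPred_eq] at hi ⊢
    exact hi.trans_le (hx hji)
  refine ⟨s.card, (Finset.card_le_univ s).trans (Fintype.card_fin p).le, funext fun j => ?_⟩
  simp only [cubeVtx_apply, ← Fin.mem_iff_lt_card_of_isLowerSet hs, s, Finset.mem_filter,
    Finset.mem_univ, true_and, Equiv.apply_symm_apply, Set.indicator_apply, Set.mem_ofPred_eq,
    Pi.one_apply]

def paddedCoord (x : Fin p → ℝ) : ℕ → ℝ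
  | 0 => 1
  | k + 1 => if h : k < p then x (σ ⟨k, h⟩) else 0

theorem paddedCoord_zero (x : Fin p → ℝ) : paddedCoord σ x 0 = 1 := rfl

theorem paddedCoord_succ (x : Fin p → ℝ) (i : Fin p) :
    paddedCoord σ x (i + 1) = x (σ i) :=
  dif_pos i.isLt

theorem paddedCoord_of_lt (x : Fin p → ℝ) {k : ℕ} (hk : p < k) : paddedCoord σ x k = 0 := by
  obtain ⟨k, rfl⟩ := Nat.exists_eq_add_one_of_ne_zero (Nat.ne_zero_of_lt hk)
  exact dif_neg (by omega)

theorem paddedCoord_add_smul (x z : Fin p → ℝ) {a b : ℝ} (hab : a + b = 1) (k : ℕ) :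
    paddedCoord σ (a • x + b • z) k = a * paddedCoord σ x k + b * paddedCoord σ z k := by
  cases k with
  | zero => simp only [paddedCoord, mul_one, hab]
  | succ k =>
    dsimp only [paddedCoord]
    split_ifs
    · rfl
    · ring

theorem paddedCoord_cubeVtx {m : ℕ} (hm : m ≤ p) (k : ℕ) :
    paddedCoord σ (cubeVtx p σ m) k = if k ≤ m then 1 else 0 := by
  rcases k with _ | k
  · exact (if_pos m.zero_le).symm
  by_cases hk : k < p
  · rw [paddedCoord_succ σ _ ⟨k, hk⟩, cubeVtx_apply, Equiv.symm_apply_apply]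
    exact if_congr Nat.lt_iff_add_one_le rfl rfl
  · rw [paddedCoord_of_lt σ _ (by omega), if_neg (by omega)]

/-- `1 ≥ x_{σ(1)} ≥ ⋯ ≥ x_{σ(p)} ≥ 0`. -/
def orderedRegion : Set (Fin p → ℝ) := {x | Antitone (paddedCoord σ x)}

theorem convex_orderedRegion : Convex ℝ (orderedRegion σ) := by
  intro x hx z hz a b ha hb hab k l hkl
  simp only [paddedCoord_add_smul σ x z hab]
  exact add_le_add (mul_le_mul_of_nonneg_left (hx hkl) ha) (mul_le_mul_of_nonneg_left (hz hkl) hb)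

theorem cubeVtx_mem_orderedRegion {m : ℕ} (hm : m ≤ p) : cubeVtx p σ m ∈ orderedRegion σ := by
  intro k l hkl
  simp only [paddedCoord_cubeVtx σ hm]
  split_ifs <;> first | omega | norm_num

theorem Ksimp_subset_orderedRegion : Ksimp p σ ⊆ orderedRegion σ :=
  convexHull_min (by rintro x ⟨m, hm, rfl⟩; exact cubeVtx_mem_orderedRegion σ hm)
    (convex_orderedRegion σ)

theorem antitone_comp_of_mem_orderedRegion {x : Fin p → ℝ} (hx : x ∈ orderedRegion σ) :
    Antitone (x ∘ σ) := fun i j hij => by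
  simpa only [Function.comp, paddedCoord_succ] using hx (Nat.succ_le_succ hij)

theorem sum_paddedCoord_sub (x : Fin p → ℝ) :
    ∑ k ∈ Finset.range (p + 1), (paddedCoord σ x k - paddedCoord σ x (k + 1)) = 1 := by
  rw [Finset.sum_range_sub', paddedCoord_zero, paddedCoord_of_lt σ x p.lt_succ_self, sub_zero]

theorem sum_paddedCoord_sub_smul_cubeVtx (x : Fin p → ℝ) :
    ∑ k ∈ Finset.range (p + 1),
      (paddedCoord σ x k - paddedCoord σ x (k + 1)) • cubeVtx p σ k = x := by
  funext j
  simp only [Finset.sum_apply, Pi.smul_apply, cubeVtx_apply, smul_eq_mul, mul_ite, mul_one,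
    mul_zero]
  rw [Finset.sum_range_ite_lt_sub _ (Nat.lt_succ_of_lt (σ.symm j).isLt), paddedCoord_succ,
    paddedCoord_of_lt σ x p.lt_succ_self, sub_zero, Equiv.apply_symm_apply]

theorem cubeVtx_eq_indicator_of_lt {x : Fin p → ℝ} (hx : x ∈ orderedRegion σ) {k : ℕ}
    (hk : paddedCoord σ x (k + 1) < paddedCoord σ x k) :
    cubeVtx p σ k = {j | paddedCoord σ x (k + 1) < x j}.indicator 1 := by
  funext j
  obtain ⟨i, rfl⟩ := σ.surjective j
  simp only [cubeVtx_apply, Set.indicator_apply, Set.mem_ofPred_eq, Pi.one_apply,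
    ← paddedCoord_succ σ x i, Equiv.symm_apply_apply]
  by_cases hik : (i : ℕ) < k
  · rw [if_pos hik, if_pos (hk.trans_le (hx (Nat.succ_le_of_lt hik)))]
  · rw [if_neg hik, if_neg (hx (Nat.succ_le_succ (not_lt.1 hik))).not_gt]

theorem Ksimp_inter_eq_convexHull_common_vertices_general (p : ℕ)
    (σ τ : Equiv.Perm (Fin p)) :
    Ksimp p σ ∩ Ksimp p τ =
      convexHull ℝ
        ({x | ∃ k ≤ p, x = cubeVtx p σ k} ∩ {x | ∃ k ≤ p, x = cubeVtx p τ k}) := by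
  refine Subset.antisymm ?_
    (subset_inter (convexHull_mono inter_subset_left) (convexHull_mono inter_subset_right))
  rintro x ⟨hxσ, hxτ⟩
  replace hxσ := Ksimp_subset_orderedRegion σ hxσ
  replace hxτ := Ksimp_subset_orderedRegion τ hxτ
  rw [← sum_paddedCoord_sub_smul_cubeVtx σ x]
  refine (convex_convexHull ℝ _).sum_mem_of_ne_zero (fun k _ => sub_nonneg.2 (hxσ k.le_succ))
    (sum_paddedCoord_sub σ x) fun k hk hw => subset_convexHull ℝ _ ⟨⟨k, ?_, rfl⟩, ?_⟩
  · exact Nat.lt_succ_iff.1 (Finset.mem_range.1 hk)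
  have hgap := (hxσ k.le_succ).lt_of_ne fun h => hw (sub_eq_zero.2 h.symm)
  obtain ⟨m, hm, hτm⟩ := exists_cubeVtx_eq_indicator τ
    (antitone_comp_of_mem_orderedRegion τ hxτ) (paddedCoord σ x (k + 1))
  exact ⟨m, hm, (cubeVtx_eq_indicator_of_lt σ hxσ hgap).trans hτm.symm⟩

/-- Any two simplices of the standard simplicial decomposition of the cube meet in a
common face: `K_σ ∩ K_τ` is the convex hull of the common vertices. -/
theorem Ksimp_inter_eq_convexHull_common_vertices (p : ℕ) (hp : 1 ≤ p)
    (σ τ : Equiv.Perm (Fin p)) :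
    Ksimp p σ ∩ Ksimp p τ =
      convexHull ℝ
        ({x | ∃ k ≤ p, x = cubeVtx p σ k} ∩ {x | ∃ k ≤ p, x = cubeVtx p τ k}) :=
  Ksimp_inter_eq_convexHull_common_vertices_general p σ τ
end
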